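/- There exists a finite set Λ of unit vectors in ℝ³ with rational coordinates such that: (i) for each ξ ∈ Λ there is a function γ_ξ, of class C^∞ on the closed ball of radius 1/2 (in the Frobenius norm) around the identity matrix Id in the space of symmetric 3×3 real matrices, such that R = ∑_{ξ∈Λ} γ_ξ(R)² · (ξ ξᵀ) for every symmetric 3×3 real matrix R with ‖R − Id‖ ≤ 1/2; (ii) for each ξ ∈ Λ there exists a unit vector A_ξ ∈ ℚ³ with ⟨ξ, A_ξ⟩ = 0, so that {ξ, A_ξ, ξ × A_ξ} is an orthonormal basis of ℝ³ consisting of vectors with rational coordinates; and (iii) there exists a natural number n_* ≥ 1 such that n_* ξ, n_* A_ξ and n_* (ξ × A_ξ) all lie in ℤ³ for every ξ ∈ Λ. -/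

import Mathlib

open scoped BigOperators

attribute [local instance] Matrix.frobeniusNormedAddCommGroup Matrix.frobeniusNormedSpace

/-! ### Auxiliary definitions and lemmas for the geometric lemma -/

@[simp] lemma vec3_two_real (a b c : ℝ) : (![a, b, c] : Fin 3 → ℝ) 2 = c := rfl

noncomputable def gg (x : ℝ) : ℝ := Real.sqrt (x^2 + 1/100)

lemma gg_pos (x : ℝ) : 0 < gg x := Real.sqrt_pos.2 (by positivity)
lemma gg_sq (x : ℝ) : gg x ^ 2 = x^2 + 1/100 := Real.sq_sqrt (by positivity)
lemma gg_neg (x : ℝ) : gg (-x) = gg x := by simp [gg]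
lemma gg_smooth : ContDiff ℝ (⊤ : ℕ∞) gg := by
  apply ContDiff.sqrt _ (fun x => by positivity)
  exact (contDiff_id.pow 2).add contDiff_const

noncomputable def qq (ξ : Fin 3 → ℝ) (R : Matrix (Fin 3) (Fin 3) ℝ) : ℝ :=
  (25/12) * (ξ 0 * ξ 1 * R 0 1 + ξ 0 * ξ 2 * R 0 2 + ξ 1 * ξ 2 * R 1 2)

noncomputable def gam (ξ : Fin 3 → ℝ) (R : Matrix (Fin 3) (Fin 3) ℝ) : ℝ :=
  if ξ 0 = 1 then Real.sqrt (R 0 0 - (3/4) * gg (R 0 1) - (4/3) * gg (R 0 2))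
  else if ξ 1 = 1 then Real.sqrt (R 1 1 - (3/4) * gg (R 1 2) - (4/3) * gg (R 0 1))
  else if ξ 2 = 1 then Real.sqrt (R 2 2 - (3/4) * gg (R 0 2) - (4/3) * gg (R 1 2))
  else Real.sqrt ((25/24) * (gg (qq ξ R) + qq ξ R))

noncomputable def Afun (ξ : Fin 3 → ℝ) : Fin 3 → ℝ :=
  if ξ 2 = 0 then ![-ξ 1, ξ 0, 0]
  else if ξ 0 = 0 then ![0, -ξ 2, ξ 1]
  else ![-ξ 2, 0, ξ 0]

noncomputable def w0 : Fin 3 → ℝ := ![1,0,0]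
noncomputable def w1 : Fin 3 → ℝ := ![0,1,0]
noncomputable def w2 : Fin 3 → ℝ := ![0,0,1]
noncomputable def w3 : Fin 3 → ℝ := ![3/5,4/5,0]
noncomputable def w4 : Fin 3 → ℝ := ![3/5,-4/5,0]
noncomputable def w5 : Fin 3 → ℝ := ![0,3/5,4/5]
noncomputable def w6 : Fin 3 → ℝ := ![0,3/5,-4/5]
noncomputable def w7 : Fin 3 → ℝ := ![4/5,0,3/5]
noncomputable def w8 : Fin 3 → ℝ := ![4/5,0,-3/5]

noncomputable def Lam : Finset (Fin 3 → ℝ) := {w0, w1, w2, w3, w4, w5, w6, w7, w8}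

lemma frob_sq (R : Matrix (Fin 3) (Fin 3) ℝ) : ‖R‖^2 = ∑ i, ∑ j, (R i j)^2 := by
  rw [Matrix.frobenius_norm_def, ← Real.rpow_natCast _ 2, ← Real.rpow_mul (by positivity)]
  rw [show (1/2 : ℝ) * (2:ℕ) = 1 by norm_num, Real.rpow_one]
  congr 1; ext i; congr 1; ext j
  rw [show ((2:ℝ)) = ((2:ℕ):ℝ) by norm_num, Real.rpow_natCast, Real.norm_eq_abs, sq_abs]

lemma ball_bound (R : Matrix (Fin 3) (Fin 3) ℝ) (hsym : R.transpose = R) (hn : ‖R - 1‖ ≤ 1/2) :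
    (R 0 0 - 1)^2 + (R 1 1 - 1)^2 + (R 2 2 - 1)^2
      + 2*(R 0 1)^2 + 2*(R 0 2)^2 + 2*(R 1 2)^2 ≤ 1/4 := by
  have h10 : R 1 0 = R 0 1 := by simpa using (congrFun (congrFun hsym 0) 1)
  have h20 : R 2 0 = R 0 2 := by simpa using (congrFun (congrFun hsym 0) 2)
  have h21 : R 2 1 = R 1 2 := by simpa using (congrFun (congrFun hsym 1) 2)
  have hsq : ‖R - 1‖^2 ≤ 1/4 := by nlinarith [norm_nonneg (R - (1 : Matrix (Fin 3) (Fin 3) ℝ))]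
  rw [frob_sq] at hsq
  simp only [Fin.sum_univ_three, Matrix.sub_apply, Matrix.one_apply] at hsq
  norm_num [Fin.ext_iff] at hsq
  rw [h10, h20, h21] at hsq
  linarith [hsq]

lemma axis_pos {x y z : ℝ} (h : (x-1)^2 + 2*y^2 + 2*z^2 ≤ 1/4) :
    0 < x - (3/4) * gg y - (4/3) * gg z := by
  have hs := gg_sq y; have ht := gg_sq z
  have hs0 := (gg_pos y).le; have ht0 := (gg_pos z).le
  nlinarith [sq_nonneg (gg y - 1/6), sq_nonneg (gg z - 1/4), sq_nonneg (x - 1 + 3/8)]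

lemma planar_pos (x : ℝ) : 0 < (25/24) * (gg x + x) := by
  have h1 := gg_pos x; have h2 := gg_sq x
  nlinarith [abs_nonneg x, sq_abs x, neg_abs_le x]

lemma planar_pos' (x : ℝ) : 0 < (25/24) * (gg x - x) := by
  have := planar_pos (-x); rw [gg_neg] at this; linarith

lemma entry_bound (i j : Fin 3) (R : Matrix (Fin 3) (Fin 3) ℝ) : ‖R i j‖ ≤ 1 * ‖R‖ := by
  rw [one_mul]
  have h1 : (R i j)^2 ≤ ‖R‖^2 := by
    rw [frob_sq]
    calc (R i j)^2 ≤ ∑ l, (R i l)^2 :=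
          Finset.single_le_sum (f := fun l => (R i l)^2) (fun l _ => sq_nonneg _)
            (Finset.mem_univ j)
      _ ≤ ∑ k, ∑ l, (R k l)^2 :=
          Finset.single_le_sum (f := fun k => ∑ l, (R k l)^2)
            (fun k _ => Finset.sum_nonneg fun l _ => sq_nonneg _) (Finset.mem_univ i)
  rw [Real.norm_eq_abs, ← Real.sqrt_sq_eq_abs, ← Real.sqrt_sq (norm_nonneg R)]
  exact Real.sqrt_le_sqrt h1

noncomputable def entryCLM (i j : Fin 3) : Matrix (Fin 3) (Fin 3) ℝ →L[ℝ] ℝ :=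
  LinearMap.mkContinuous
    { toFun := fun R => R i j
      map_add' := fun _ _ => rfl
      map_smul' := fun _ _ => rfl } 1 (entry_bound i j)

lemma entry_smooth (i j : Fin 3) :
    ContDiff ℝ (⊤ : ℕ∞) (fun R : Matrix (Fin 3) (Fin 3) ℝ => R i j) := (entryCLM i j).contDiff

section gamval
variable (R : Matrix (Fin 3) (Fin 3) ℝ)

lemma gam_planar (ξ : Fin 3 → ℝ) (h0 : ξ 0 ≠ 1) (h1 : ξ 1 ≠ 1) (h2 : ξ 2 ≠ 1) :
    gam ξ R = Real.sqrt ((25/24) * (gg (qq ξ R) + qq ξ R)) := by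
  simp [gam, h0, h1, h2]

lemma gam0 : gam w0 R = Real.sqrt (R 0 0 - (3/4) * gg (R 0 1) - (4/3) * gg (R 0 2)) := by
  simp [gam, w0]
lemma gam1 : gam w1 R = Real.sqrt (R 1 1 - (3/4) * gg (R 1 2) - (4/3) * gg (R 0 1)) := by
  simp [gam, w1]
lemma gam2 : gam w2 R = Real.sqrt (R 2 2 - (3/4) * gg (R 0 2) - (4/3) * gg (R 1 2)) := by
  simp [gam, w2]
lemma gam3 : gam w3 R = Real.sqrt ((25/24) * (gg (R 0 1) + R 0 1)) := by
  rw [gam_planar R w3 (by norm_num [w3]) (by norm_num [w3]) (by norm_num [w3]),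
    show qq w3 R = R 0 1 by simp [qq, w3]; ring]
lemma gam4 : gam w4 R = Real.sqrt ((25/24) * (gg (R 0 1) - R 0 1)) := by
  rw [gam_planar R w4 (by norm_num [w4]) (by norm_num [w4]) (by norm_num [w4]),
    show qq w4 R = -(R 0 1) by simp [qq, w4]; ring, gg_neg]
  ring_nf
lemma gam5 : gam w5 R = Real.sqrt ((25/24) * (gg (R 1 2) + R 1 2)) := by
  rw [gam_planar R w5 (by norm_num [w5]) (by norm_num [w5]) (by norm_num [w5]),
    show qq w5 R = R 1 2 by simp [qq, w5]; ring]
lemma gam6 : gam w6 R = Real.sqrt ((25/24) * (gg (R 1 2) - R 1 2)) := by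
  rw [gam_planar R w6 (by norm_num [w6]) (by norm_num [w6]) (by norm_num [w6]),
    show qq w6 R = -(R 1 2) by simp [qq, w6]; ring, gg_neg]
  ring_nf
lemma gam7 : gam w7 R = Real.sqrt ((25/24) * (gg (R 0 2) + R 0 2)) := by
  rw [gam_planar R w7 (by norm_num [w7]) (by norm_num [w7]) (by norm_num [w7]),
    show qq w7 R = R 0 2 by simp [qq, w7]; ring]
lemma gam8 : gam w8 R = Real.sqrt ((25/24) * (gg (R 0 2) - R 0 2)) := by
  rw [gam_planar R w8 (by norm_num [w8]) (by norm_num [w8]) (by norm_num [w8]),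
    show qq w8 R = -(R 0 2) by simp [qq, w8]; ring, gg_neg]
  ring_nf

end gamval

lemma sum_Lam (f : (Fin 3 → ℝ) → Matrix (Fin 3) (Fin 3) ℝ) :
    ∑ ξ ∈ Lam, f ξ = f w0 + f w1 + f w2 + f w3 + f w4 + f w5 + f w6 + f w7 + f w8 := by
  have h : ∀ (u v : Fin 3 → ℝ), (∃ i, u i ≠ v i) → u ≠ v := fun u v ⟨i, hi⟩ hh => hi (by rw [hh])
  rw [Lam]
  rw [Finset.sum_insert (by
    simp only [Finset.mem_insert, Finset.mem_singleton]
    push_neg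
    and_intros <;>
      first
      | (refine h _ _ ⟨0, ?_⟩; norm_num [w0,w1,w2,w3,w4,w5,w6,w7,w8]; done)
      | (refine h _ _ ⟨1, ?_⟩; norm_num [w0,w1,w2,w3,w4,w5,w6,w7,w8]; done)
      | (refine h _ _ ⟨2, ?_⟩; norm_num [w0,w1,w2,w3,w4,w5,w6,w7,w8]; done))]
  rw [Finset.sum_insert (by
    simp only [Finset.mem_insert, Finset.mem_singleton]
    push_neg
    and_intros <;>
      first
      | (refine h _ _ ⟨0, ?_⟩; norm_num [w0,w1,w2,w3,w4,w5,w6,w7,w8]; done)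
      | (refine h _ _ ⟨1, ?_⟩; norm_num [w0,w1,w2,w3,w4,w5,w6,w7,w8]; done)
      | (refine h _ _ ⟨2, ?_⟩; norm_num [w0,w1,w2,w3,w4,w5,w6,w7,w8]; done))]
  rw [Finset.sum_insert (by
    simp only [Finset.mem_insert, Finset.mem_singleton]
    push_neg
    and_intros <;>
      first
      | (refine h _ _ ⟨0, ?_⟩; norm_num [w0,w1,w2,w3,w4,w5,w6,w7,w8]; done)
      | (refine h _ _ ⟨1, ?_⟩; norm_num [w0,w1,w2,w3,w4,w5,w6,w7,w8]; done)
      | (refine h _ _ ⟨2, ?_⟩; norm_num [w0,w1,w2,w3,w4,w5,w6,w7,w8]; done))]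
  rw [Finset.sum_insert (by
    simp only [Finset.mem_insert, Finset.mem_singleton]
    push_neg
    and_intros <;>
      first
      | (refine h _ _ ⟨0, ?_⟩; norm_num [w0,w1,w2,w3,w4,w5,w6,w7,w8]; done)
      | (refine h _ _ ⟨1, ?_⟩; norm_num [w0,w1,w2,w3,w4,w5,w6,w7,w8]; done)
      | (refine h _ _ ⟨2, ?_⟩; norm_num [w0,w1,w2,w3,w4,w5,w6,w7,w8]; done))]
  rw [Finset.sum_insert (by
    simp only [Finset.mem_insert, Finset.mem_singleton]
    push_neg
    and_intros <;>
      first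
      | (refine h _ _ ⟨0, ?_⟩; norm_num [w0,w1,w2,w3,w4,w5,w6,w7,w8]; done)
      | (refine h _ _ ⟨1, ?_⟩; norm_num [w0,w1,w2,w3,w4,w5,w6,w7,w8]; done)
      | (refine h _ _ ⟨2, ?_⟩; norm_num [w0,w1,w2,w3,w4,w5,w6,w7,w8]; done))]
  rw [Finset.sum_insert (by
    simp only [Finset.mem_insert, Finset.mem_singleton]
    push_neg
    and_intros <;>
      first
      | (refine h _ _ ⟨0, ?_⟩; norm_num [w0,w1,w2,w3,w4,w5,w6,w7,w8]; done)
      | (refine h _ _ ⟨1, ?_⟩; norm_num [w0,w1,w2,w3,w4,w5,w6,w7,w8]; done)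
      | (refine h _ _ ⟨2, ?_⟩; norm_num [w0,w1,w2,w3,w4,w5,w6,w7,w8]; done))]
  rw [Finset.sum_insert (by
    simp only [Finset.mem_insert, Finset.mem_singleton]
    push_neg
    and_intros <;>
      first
      | (refine h _ _ ⟨0, ?_⟩; norm_num [w0,w1,w2,w3,w4,w5,w6,w7,w8]; done)
      | (refine h _ _ ⟨1, ?_⟩; norm_num [w0,w1,w2,w3,w4,w5,w6,w7,w8]; done)
      | (refine h _ _ ⟨2, ?_⟩; norm_num [w0,w1,w2,w3,w4,w5,w6,w7,w8]; done))]
  rw [Finset.sum_insert (by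
    simp only [Finset.mem_singleton]
    refine h _ _ ⟨2, ?_⟩; norm_num [w7,w8]), Finset.sum_singleton]
  abel

set_option maxHeartbeats 2000000 in
lemma decomp (R : Matrix (Fin 3) (Fin 3) ℝ) (hsym : R.transpose = R) (hn : ‖R - 1‖ ≤ 1/2) :
    R = ∑ ξ ∈ Lam, (gam ξ R) ^ 2 • Matrix.vecMulVec ξ ξ := by
  have hb := ball_bound R hsym hn
  have h10 : R 1 0 = R 0 1 := by simpa using (congrFun (congrFun hsym 0) 1)
  have h20 : R 2 0 = R 0 2 := by simpa using (congrFun (congrFun hsym 0) 2)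
  have h21 : R 2 1 = R 1 2 := by simpa using (congrFun (congrFun hsym 1) 2)
  have e0 : (gam w0 R)^2 = R 0 0 - (3/4) * gg (R 0 1) - (4/3) * gg (R 0 2) := by
    rw [gam0]; exact Real.sq_sqrt (axis_pos (by nlinarith [sq_nonneg (R 1 1 - 1), sq_nonneg (R 2 2 - 1), sq_nonneg (R 1 2)])).le
  have e1 : (gam w1 R)^2 = R 1 1 - (3/4) * gg (R 1 2) - (4/3) * gg (R 0 1) := by
    rw [gam1]; exact Real.sq_sqrt (axis_pos (by nlinarith [sq_nonneg (R 0 0 - 1), sq_nonneg (R 2 2 - 1), sq_nonneg (R 0 2)])).le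
  have e2 : (gam w2 R)^2 = R 2 2 - (3/4) * gg (R 0 2) - (4/3) * gg (R 1 2) := by
    rw [gam2]; exact Real.sq_sqrt (axis_pos (by nlinarith [sq_nonneg (R 0 0 - 1), sq_nonneg (R 1 1 - 1), sq_nonneg (R 0 1)])).le
  have e3 : (gam w3 R)^2 = (25/24) * (gg (R 0 1) + R 0 1) := by
    rw [gam3]; exact Real.sq_sqrt (planar_pos _).le
  have e4 : (gam w4 R)^2 = (25/24) * (gg (R 0 1) - R 0 1) := by
    rw [gam4]; exact Real.sq_sqrt (planar_pos' _).le
  have e5 : (gam w5 R)^2 = (25/24) * (gg (R 1 2) + R 1 2) := by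
    rw [gam5]; exact Real.sq_sqrt (planar_pos _).le
  have e6 : (gam w6 R)^2 = (25/24) * (gg (R 1 2) - R 1 2) := by
    rw [gam6]; exact Real.sq_sqrt (planar_pos' _).le
  have e7 : (gam w7 R)^2 = (25/24) * (gg (R 0 2) + R 0 2) := by
    rw [gam7]; exact Real.sq_sqrt (planar_pos _).le
  have e8 : (gam w8 R)^2 = (25/24) * (gg (R 0 2) - R 0 2) := by
    rw [gam8]; exact Real.sq_sqrt (planar_pos' _).le
  rw [sum_Lam]
  ext i j
  simp only [Matrix.add_apply, Matrix.smul_apply, Matrix.vecMulVec_apply, smul_eq_mul,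
    e0, e1, e2, e3, e4, e5, e6, e7, e8]
  fin_cases i <;> fin_cases j <;>
    norm_num [w0, w1, w2, w3, w4, w5, w6, w7, w8, show ((⟨0, by norm_num⟩ : Fin 3)) = 0 from rfl, show ((⟨1, by norm_num⟩ : Fin 3)) = 1 from rfl, show ((⟨2, by norm_num⟩ : Fin 3)) = 2 from rfl] <;>
    first
      | exact rfl
      | (rw [show R 1 0 = R 0 1 from h10]; ring)
      | (rw [show R 2 0 = R 0 2 from h20]; ring)
      | (rw [show R 2 1 = R 1 2 from h21]; ring)
      | ring
      | rfl


def SymBall : Set (Matrix (Fin 3) (Fin 3) ℝ) :=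
  {R : Matrix (Fin 3) (Fin 3) ℝ | R.transpose = R ∧ ‖R - 1‖ ≤ 1 / 2}

lemma smooth_planar_plus (i j : Fin 3) :
    ContDiffOn ℝ (⊤ : ℕ∞) (fun R : Matrix (Fin 3) (Fin 3) ℝ =>
      Real.sqrt ((25/24) * (gg (R i j) + R i j))) SymBall :=
  ((contDiff_const.mul ((gg_smooth.comp (entry_smooth i j)).add
    (entry_smooth i j))).contDiffOn).sqrt (fun R _ => (planar_pos (R i j)).ne')

lemma smooth_planar_minus (i j : Fin 3) :
    ContDiffOn ℝ (⊤ : ℕ∞) (fun R : Matrix (Fin 3) (Fin 3) ℝ =>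
      Real.sqrt ((25/24) * (gg (R i j) - R i j))) SymBall :=
  ((contDiff_const.mul ((gg_smooth.comp (entry_smooth i j)).sub
    (entry_smooth i j))).contDiffOn).sqrt (fun R _ => (planar_pos' (R i j)).ne')

lemma smooth_gam0 : ContDiffOn ℝ (⊤ : ℕ∞) (gam w0) SymBall := by
  have hfe : gam w0 = fun R : Matrix (Fin 3) (Fin 3) ℝ =>
      Real.sqrt (R 0 0 - (3/4) * gg (R 0 1) - (4/3) * gg (R 0 2)) := funext fun R => gam0 R
  rw [hfe]
  refine ContDiff.contDiffOn ?_ |>.sqrt fun R hR => ?_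
  · exact ((entry_smooth 0 0).sub (contDiff_const.mul (gg_smooth.comp (entry_smooth 0 1)))).sub
      (contDiff_const.mul (gg_smooth.comp (entry_smooth 0 2)))
  · have hb := ball_bound R hR.1 hR.2
    exact (axis_pos (by nlinarith [sq_nonneg (R 1 1 - 1), sq_nonneg (R 2 2 - 1), sq_nonneg (R 1 2)])).ne'

lemma smooth_gam1 : ContDiffOn ℝ (⊤ : ℕ∞) (gam w1) SymBall := by
  have hfe : gam w1 = fun R : Matrix (Fin 3) (Fin 3) ℝ =>
      Real.sqrt (R 1 1 - (3/4) * gg (R 1 2) - (4/3) * gg (R 0 1)) := funext fun R => gam1 R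
  rw [hfe]
  refine ContDiff.contDiffOn ?_ |>.sqrt fun R hR => ?_
  · exact ((entry_smooth 1 1).sub (contDiff_const.mul (gg_smooth.comp (entry_smooth 1 2)))).sub
      (contDiff_const.mul (gg_smooth.comp (entry_smooth 0 1)))
  · have hb := ball_bound R hR.1 hR.2
    exact (axis_pos (by nlinarith [sq_nonneg (R 0 0 - 1), sq_nonneg (R 2 2 - 1), sq_nonneg (R 0 2)])).ne'

lemma smooth_gam2 : ContDiffOn ℝ (⊤ : ℕ∞) (gam w2) SymBall := by
  have hfe : gam w2 = fun R : Matrix (Fin 3) (Fin 3) ℝ =>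
      Real.sqrt (R 2 2 - (3/4) * gg (R 0 2) - (4/3) * gg (R 1 2)) := funext fun R => gam2 R
  rw [hfe]
  refine ContDiff.contDiffOn ?_ |>.sqrt fun R hR => ?_
  · exact ((entry_smooth 2 2).sub (contDiff_const.mul (gg_smooth.comp (entry_smooth 0 2)))).sub
      (contDiff_const.mul (gg_smooth.comp (entry_smooth 1 2)))
  · have hb := ball_bound R hR.1 hR.2
    exact (axis_pos (by nlinarith [sq_nonneg (R 0 0 - 1), sq_nonneg (R 1 1 - 1), sq_nonneg (R 0 1)])).ne'

lemma smooth_gam3 : ContDiffOn ℝ (⊤ : ℕ∞) (gam w3) SymBall := by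
  have hfe : gam w3 = fun R : Matrix (Fin 3) (Fin 3) ℝ =>
      Real.sqrt ((25/24) * (gg (R 0 1) + R 0 1)) := funext fun R => gam3 R
  rw [hfe]; exact smooth_planar_plus 0 1

lemma smooth_gam4 : ContDiffOn ℝ (⊤ : ℕ∞) (gam w4) SymBall := by
  have hfe : gam w4 = fun R : Matrix (Fin 3) (Fin 3) ℝ =>
      Real.sqrt ((25/24) * (gg (R 0 1) - R 0 1)) := funext fun R => gam4 R
  rw [hfe]; exact smooth_planar_minus 0 1

lemma smooth_gam5 : ContDiffOn ℝ (⊤ : ℕ∞) (gam w5) SymBall := by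
  have hfe : gam w5 = fun R : Matrix (Fin 3) (Fin 3) ℝ =>
      Real.sqrt ((25/24) * (gg (R 1 2) + R 1 2)) := funext fun R => gam5 R
  rw [hfe]; exact smooth_planar_plus 1 2

lemma smooth_gam6 : ContDiffOn ℝ (⊤ : ℕ∞) (gam w6) SymBall := by
  have hfe : gam w6 = fun R : Matrix (Fin 3) (Fin 3) ℝ =>
      Real.sqrt ((25/24) * (gg (R 1 2) - R 1 2)) := funext fun R => gam6 R
  rw [hfe]; exact smooth_planar_minus 1 2

lemma smooth_gam7 : ContDiffOn ℝ (⊤ : ℕ∞) (gam w7) SymBall := by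
  have hfe : gam w7 = fun R : Matrix (Fin 3) (Fin 3) ℝ =>
      Real.sqrt ((25/24) * (gg (R 0 2) + R 0 2)) := funext fun R => gam7 R
  rw [hfe]; exact smooth_planar_plus 0 2

lemma smooth_gam8 : ContDiffOn ℝ (⊤ : ℕ∞) (gam w8) SymBall := by
  have hfe : gam w8 = fun R : Matrix (Fin 3) (Fin 3) ℝ =>
      Real.sqrt ((25/24) * (gg (R 0 2) - R 0 2)) := funext fun R => gam8 R
  rw [hfe]; exact smooth_planar_minus 0 2

lemma mem_Lam {ξ : Fin 3 → ℝ} (hξ : ξ ∈ Lam) :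
    ξ = w0 ∨ ξ = w1 ∨ ξ = w2 ∨ ξ = w3 ∨ ξ = w4 ∨ ξ = w5 ∨ ξ = w6 ∨ ξ = w7 ∨ ξ = w8 := by
  simpa [Lam, Finset.mem_insert, Finset.mem_singleton] using hξ

lemma Af0 : Afun ![1,0,0] = ![0,1,0] := by
  funext i; fin_cases i <;> norm_num [Afun, Matrix.cons_val_two]
lemma Cf0 : crossProduct (![1,0,0] : Fin 3 → ℝ) ![0,1,0] = ![0,0,1] := by
  funext i; fin_cases i <;> norm_num [cross_apply]

lemma Af1 : Afun ![0,1,0] = ![-1,0,0] := by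
  funext i; fin_cases i <;> norm_num [Afun, Matrix.cons_val_two]
lemma Cf1 : crossProduct (![0,1,0] : Fin 3 → ℝ) ![-1,0,0] = ![0,0,1] := by
  funext i; fin_cases i <;> norm_num [cross_apply]

lemma Af2 : Afun ![0,0,1] = ![0,-1,0] := by
  funext i; fin_cases i <;> norm_num [Afun, Matrix.cons_val_two]
lemma Cf2 : crossProduct (![0,0,1] : Fin 3 → ℝ) ![0,-1,0] = ![1,0,0] := by
  funext i; fin_cases i <;> norm_num [cross_apply]

lemma Af3 : Afun ![3/5,4/5,0] = ![-(4/5),3/5,0] := by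
  funext i; fin_cases i <;> norm_num [Afun]
lemma Cf3 : crossProduct (![3/5,4/5,0] : Fin 3 → ℝ) ![-(4/5),3/5,0] = ![0,0,1] := by
  funext i; fin_cases i <;> norm_num [cross_apply]

lemma Af4 : Afun ![3/5,-(4/5),0] = ![4/5,3/5,0] := by
  funext i; fin_cases i <;> norm_num [Afun]
lemma Cf4 : crossProduct (![3/5,-(4/5),0] : Fin 3 → ℝ) ![4/5,3/5,0] = ![0,0,1] := by
  funext i; fin_cases i <;> norm_num [cross_apply]

lemma Af5 : Afun ![0,3/5,4/5] = ![0,-(4/5),3/5] := by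
  funext i; fin_cases i <;> norm_num [Afun]
lemma Cf5 : crossProduct (![0,3/5,4/5] : Fin 3 → ℝ) ![0,-(4/5),3/5] = ![1,0,0] := by
  funext i; fin_cases i <;> norm_num [cross_apply]

lemma Af6 : Afun ![0,3/5,-(4/5)] = ![0,4/5,3/5] := by
  funext i; fin_cases i <;> norm_num [Afun]
lemma Cf6 : crossProduct (![0,3/5,-(4/5)] : Fin 3 → ℝ) ![0,4/5,3/5] = ![1,0,0] := by
  funext i; fin_cases i <;> norm_num [cross_apply]

lemma Af7 : Afun ![4/5,0,3/5] = ![-(3/5),0,4/5] := by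
  funext i; fin_cases i <;> norm_num [Afun]
lemma Cf7 : crossProduct (![4/5,0,3/5] : Fin 3 → ℝ) ![-(3/5),0,4/5] = ![0,-1,0] := by
  funext i; fin_cases i <;> norm_num [cross_apply]

lemma Af8 : Afun ![4/5,0,-(3/5)] = ![3/5,0,4/5] := by
  funext i; fin_cases i <;> norm_num [Afun]
lemma Cf8 : crossProduct (![4/5,0,-(3/5)] : Fin 3 → ℝ) ![3/5,0,4/5] = ![0,-1,0] := by
  funext i; fin_cases i <;> norm_num [cross_apply]

set_option maxHeartbeats 4000000 in
/-- The First Geometric Lemma underlying intermittent jets: there is a finite set `Λ` of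
rational unit vectors in `ℝ³`, smooth functions `γ_ξ` on the closed Frobenius ball of radius
`1/2` around the identity in the symmetric `3×3` matrices with
`R = ∑_{ξ ∈ Λ} γ_ξ(R)² (ξ ξᵀ)` there, rational unit vectors `A_ξ ⊥ ξ` (so that
`{ξ, A_ξ, ξ × A_ξ}` is an orthonormal basis of `ℝ³` with rational coordinates), and a natural
number `n⁎ ≥ 1` with `n⁎ ξ, n⁎ A_ξ, n⁎ (ξ × A_ξ) ∈ ℤ³` for every `ξ ∈ Λ`. -/
theorem geometric_lemma :
    ∃ (Λ : Finset (Fin 3 → ℝ)) (γfun : (Fin 3 → ℝ) → Matrix (Fin 3) (Fin 3) ℝ → ℝ)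
      (A : (Fin 3 → ℝ) → Fin 3 → ℝ) (nstar : ℕ),
      1 ≤ nstar ∧
      -- the directions ξ ∈ Λ are unit vectors with rational coordinates
      (∀ ξ ∈ Λ, (∑ i, ξ i ^ 2 = 1) ∧ ∀ i, ∃ q : ℚ, ξ i = (q : ℝ)) ∧
      -- (i) each γ_ξ is C^∞ on the closed ball of radius 1/2 around Id in the symmetric
      -- matrices (Frobenius norm), and the rank-one decomposition holds there
      (∀ ξ ∈ Λ, ContDiffOn ℝ (⊤ : ℕ∞) (γfun ξ)
          {R : Matrix (Fin 3) (Fin 3) ℝ | R.transpose = R ∧ ‖R - 1‖ ≤ 1 / 2}) ∧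
      (∀ R : Matrix (Fin 3) (Fin 3) ℝ, R.transpose = R → ‖R - 1‖ ≤ 1 / 2 →
          R = ∑ ξ ∈ Λ, (γfun ξ R) ^ 2 • Matrix.vecMulVec ξ ξ) ∧
      -- (ii) the rational orthonormal frames {ξ, A_ξ, ξ × A_ξ}
      (∀ ξ ∈ Λ,
          (∑ i, A ξ i ^ 2 = 1) ∧ (∀ i, ∃ q : ℚ, A ξ i = (q : ℝ)) ∧
          (∑ i, ξ i * A ξ i = 0) ∧
          (∑ i, (crossProduct ξ (A ξ)) i ^ 2 = 1) ∧
          (∀ i, ∃ q : ℚ, (crossProduct ξ (A ξ)) i = (q : ℝ)) ∧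
          (∑ i, ξ i * (crossProduct ξ (A ξ)) i = 0) ∧
          (∑ i, A ξ i * (crossProduct ξ (A ξ)) i = 0)) ∧
      -- (iii) n⁎ ξ, n⁎ A_ξ and n⁎ (ξ × A_ξ) all lie in ℤ³
      (∀ ξ ∈ Λ, ∀ i : Fin 3,
          (∃ m : ℤ, (nstar : ℝ) * ξ i = (m : ℝ)) ∧
          (∃ m : ℤ, (nstar : ℝ) * A ξ i = (m : ℝ)) ∧
          (∃ m : ℤ, (nstar : ℝ) * (crossProduct ξ (A ξ)) i = (m : ℝ))) := by
  refine ⟨Lam, gam, Afun, 5, by norm_num, ?_, ?_, ?_, ?_, ?_⟩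
  · intro ξ hξ
    rcases mem_Lam hξ with rfl|rfl|rfl|rfl|rfl|rfl|rfl|rfl|rfl <;>
      refine ⟨by norm_num [Fin.sum_univ_three, w0,w1,w2,w3,w4,w5,w6,w7,w8], fun i => ?_⟩ <;>
      fin_cases i <;>
      first
        | (refine ⟨0, ?_⟩; norm_num [w0,w1,w2,w3,w4,w5,w6,w7,w8]; done)
        | (refine ⟨1, ?_⟩; norm_num [w0,w1,w2,w3,w4,w5,w6,w7,w8]; done)
        | (refine ⟨-1, ?_⟩; norm_num [w0,w1,w2,w3,w4,w5,w6,w7,w8]; done)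
        | (refine ⟨3/5, ?_⟩; norm_num [w0,w1,w2,w3,w4,w5,w6,w7,w8]; done)
        | (refine ⟨-3/5, ?_⟩; norm_num [w0,w1,w2,w3,w4,w5,w6,w7,w8]; done)
        | (refine ⟨4/5, ?_⟩; norm_num [w0,w1,w2,w3,w4,w5,w6,w7,w8]; done)
        | (refine ⟨-4/5, ?_⟩; norm_num [w0,w1,w2,w3,w4,w5,w6,w7,w8]; done)
  · intro ξ hξ
    rcases mem_Lam hξ with rfl|rfl|rfl|rfl|rfl|rfl|rfl|rfl|rfl
    exacts [smooth_gam0, smooth_gam1, smooth_gam2, smooth_gam3, smooth_gam4, smooth_gam5,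
      smooth_gam6, smooth_gam7, smooth_gam8]
  · exact fun R h1 h2 => decomp R h1 h2
  · intro ξ hξ
    rcases mem_Lam hξ with rfl|rfl|rfl|rfl|rfl|rfl|rfl|rfl|rfl <;>
      refine ⟨by norm_num [Fin.sum_univ_three, w0,w1,w2,w3,w4,w5,w6,w7,w8,Af0,Af1,Af2,Af3,Af4,Af5,Af6,Af7,Af8,Cf0,Cf1,Cf2,Cf3,Cf4,Cf5,Cf6,Cf7,Cf8], fun i => ?_,
        by norm_num [Fin.sum_univ_three, w0,w1,w2,w3,w4,w5,w6,w7,w8,Af0,Af1,Af2,Af3,Af4,Af5,Af6,Af7,Af8,Cf0,Cf1,Cf2,Cf3,Cf4,Cf5,Cf6,Cf7,Cf8],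
        by norm_num [Fin.sum_univ_three, w0,w1,w2,w3,w4,w5,w6,w7,w8,Af0,Af1,Af2,Af3,Af4,Af5,Af6,Af7,Af8,Cf0,Cf1,Cf2,Cf3,Cf4,Cf5,Cf6,Cf7,Cf8], fun i => ?_,
        by norm_num [Fin.sum_univ_three, w0,w1,w2,w3,w4,w5,w6,w7,w8,Af0,Af1,Af2,Af3,Af4,Af5,Af6,Af7,Af8,Cf0,Cf1,Cf2,Cf3,Cf4,Cf5,Cf6,Cf7,Cf8],
        by norm_num [Fin.sum_univ_three, w0,w1,w2,w3,w4,w5,w6,w7,w8,Af0,Af1,Af2,Af3,Af4,Af5,Af6,Af7,Af8,Cf0,Cf1,Cf2,Cf3,Cf4,Cf5,Cf6,Cf7,Cf8]⟩ <;>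
      fin_cases i <;>
      first
        | (refine ⟨0, ?_⟩; norm_num [w0,w1,w2,w3,w4,w5,w6,w7,w8,Af0,Af1,Af2,Af3,Af4,Af5,Af6,Af7,Af8,Cf0,Cf1,Cf2,Cf3,Cf4,Cf5,Cf6,Cf7,Cf8]; done)
        | (refine ⟨1, ?_⟩; norm_num [w0,w1,w2,w3,w4,w5,w6,w7,w8,Af0,Af1,Af2,Af3,Af4,Af5,Af6,Af7,Af8,Cf0,Cf1,Cf2,Cf3,Cf4,Cf5,Cf6,Cf7,Cf8]; done)
        | (refine ⟨-1, ?_⟩; norm_num [w0,w1,w2,w3,w4,w5,w6,w7,w8,Af0,Af1,Af2,Af3,Af4,Af5,Af6,Af7,Af8,Cf0,Cf1,Cf2,Cf3,Cf4,Cf5,Cf6,Cf7,Cf8]; done)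
        | (refine ⟨3/5, ?_⟩; norm_num [w0,w1,w2,w3,w4,w5,w6,w7,w8,Af0,Af1,Af2,Af3,Af4,Af5,Af6,Af7,Af8,Cf0,Cf1,Cf2,Cf3,Cf4,Cf5,Cf6,Cf7,Cf8]; done)
        | (refine ⟨-3/5, ?_⟩; norm_num [w0,w1,w2,w3,w4,w5,w6,w7,w8,Af0,Af1,Af2,Af3,Af4,Af5,Af6,Af7,Af8,Cf0,Cf1,Cf2,Cf3,Cf4,Cf5,Cf6,Cf7,Cf8]; done)
        | (refine ⟨4/5, ?_⟩; norm_num [w0,w1,w2,w3,w4,w5,w6,w7,w8,Af0,Af1,Af2,Af3,Af4,Af5,Af6,Af7,Af8,Cf0,Cf1,Cf2,Cf3,Cf4,Cf5,Cf6,Cf7,Cf8]; done)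
        | (refine ⟨-4/5, ?_⟩; norm_num [w0,w1,w2,w3,w4,w5,w6,w7,w8,Af0,Af1,Af2,Af3,Af4,Af5,Af6,Af7,Af8,Cf0,Cf1,Cf2,Cf3,Cf4,Cf5,Cf6,Cf7,Cf8]; done)
  · intro ξ hξ i
    rcases mem_Lam hξ with rfl|rfl|rfl|rfl|rfl|rfl|rfl|rfl|rfl <;>
      refine ⟨?_, ?_, ?_⟩ <;>
      fin_cases i <;>
      first
        | (refine ⟨0, ?_⟩; norm_num [w0,w1,w2,w3,w4,w5,w6,w7,w8,Af0,Af1,Af2,Af3,Af4,Af5,Af6,Af7,Af8,Cf0,Cf1,Cf2,Cf3,Cf4,Cf5,Cf6,Cf7,Cf8]; done)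
        | (refine ⟨5, ?_⟩; norm_num [w0,w1,w2,w3,w4,w5,w6,w7,w8,Af0,Af1,Af2,Af3,Af4,Af5,Af6,Af7,Af8,Cf0,Cf1,Cf2,Cf3,Cf4,Cf5,Cf6,Cf7,Cf8]; done)
        | (refine ⟨-5, ?_⟩; norm_num [w0,w1,w2,w3,w4,w5,w6,w7,w8,Af0,Af1,Af2,Af3,Af4,Af5,Af6,Af7,Af8,Cf0,Cf1,Cf2,Cf3,Cf4,Cf5,Cf6,Cf7,Cf8]; done)
        | (refine ⟨3, ?_⟩; norm_num [w0,w1,w2,w3,w4,w5,w6,w7,w8,Af0,Af1,Af2,Af3,Af4,Af5,Af6,Af7,Af8,Cf0,Cf1,Cf2,Cf3,Cf4,Cf5,Cf6,Cf7,Cf8]; done)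
        | (refine ⟨-3, ?_⟩; norm_num [w0,w1,w2,w3,w4,w5,w6,w7,w8,Af0,Af1,Af2,Af3,Af4,Af5,Af6,Af7,Af8,Cf0,Cf1,Cf2,Cf3,Cf4,Cf5,Cf6,Cf7,Cf8]; done)
        | (refine ⟨4, ?_⟩; norm_num [w0,w1,w2,w3,w4,w5,w6,w7,w8,Af0,Af1,Af2,Af3,Af4,Af5,Af6,Af7,Af8,Cf0,Cf1,Cf2,Cf3,Cf4,Cf5,Cf6,Cf7,Cf8]; done)
        | (refine ⟨-4, ?_⟩; norm_num [w0,w1,w2,w3,w4,w5,w6,w7,w8,Af0,Af1,Af2,Af3,Af4,Af5,Af6,Af7,Af8,Cf0,Cf1,Cf2,Cf3,Cf4,Cf5,Cf6,Cf7,Cf8]; done)
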